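/- arXiv:2206.13490 — 5 statements merged into one kernel-verified Lean document; each statement's English description precedes it below -/
import Mathlib

section
/- Let p₀ be the unique real root of the polynomial 4x³ - 7x² + 5x - 1. For every p ∈ (0,1): if p < p₀ then 1 + (p/(1-p))² - (1-p)^(-1/2) < 0, and if p > p₀ then 1 + (p/(1-p))² - (1-p)^(-1/2) > 0. -/
set_option maxHeartbeats 1000000


theorem sign_of_expr_around_root (p₀ : ℝ) (hroot : 4 * p₀ ^ 3 - 7 * p₀ ^ 2 + 5 * p₀ - 1 = 0)
    (p : ℝ) (hp : 0 < p) (hp1 : p < 1) :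
    (p < p₀ → 1 + (p / (1 - p)) ^ 2 - (1 - p) ^ (-(1 / 2 : ℝ)) < 0) ∧
    (p₀ < p → 1 + (p / (1 - p)) ^ 2 - (1 - p) ^ (-(1 / 2 : ℝ)) > 0) := by
  have hq : (0:ℝ) < 1 - p := by linarith
  set r := Real.sqrt (1 - p) with hrdef
  have hr0 : 0 < r := Real.sqrt_pos.2 hq
  have hr2 : r ^ 2 = 1 - p := Real.sq_sqrt hq.le
  clear_value r
  have hrpow : (1 - p) ^ (-(1/2 : ℝ)) = r⁻¹ := by
    rw [Real.rpow_neg hq.le, ← Real.sqrt_eq_rpow, ← hrdef]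
  rw [hrpow]
  have h6 : r ^ 6 = (1 - p) ^ 3 := by rw [← hr2]; ring
  have hApos : 0 < (1-p)^2 + p^2 := by positivity
  have e : 1 + (p / (1 - p)) ^ 2 = ((1-p)^2 + p^2) / (1-p)^2 := by
    field_simp
  have hinv : r⁻¹ = 1 / r := (one_div r).symm
  constructor
  · intro hlt
    have hh : 0 < 4*(p^2 + p*p₀ + p₀^2) - 7*(p + p₀) + 5 := by
      nlinarith [sq_nonneg (4*p + 2*p₀ - 7/2), sq_nonneg (p₀ - 7/12)]
    have hc : 4 * p ^ 3 - 7 * p ^ 2 + 5 * p - 1 < 0 := by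
      nlinarith [mul_pos (sub_pos.2 hlt) hh]
    have hgt : ((1-p)^2 + p^2) ^ 2 < r ^ 6 := by
      nlinarith [h6, mul_pos hp (by linarith : (0:ℝ) < -(4 * p ^ 3 - 7 * p ^ 2 + 5 * p - 1))]
    have hA : (1-p)^2 + p^2 < r ^ 3 := by
      nlinarith [pow_pos hr0 3, hApos]
    have key : ((1-p)^2 + p^2) * r < (1-p)^2 := by
      nlinarith [mul_lt_mul_of_pos_right hA hr0, hr2]
    have h1 : 1 + (p / (1 - p)) ^ 2 < r⁻¹ := by
      rw [e, hinv, div_lt_div_iff₀ (by positivity) hr0]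
      linarith
    linarith
  · intro hlt
    have hh : 0 < 4*(p^2 + p*p₀ + p₀^2) - 7*(p + p₀) + 5 := by
      nlinarith [sq_nonneg (4*p + 2*p₀ - 7/2), sq_nonneg (p₀ - 7/12)]
    have hc : 0 < 4 * p ^ 3 - 7 * p ^ 2 + 5 * p - 1 := by
      nlinarith [mul_pos (sub_pos.2 hlt) hh]
    have hgt : r ^ 6 < ((1-p)^2 + p^2) ^ 2 := by
      nlinarith [h6, mul_pos hp hc]
    have hA : r ^ 3 < (1-p)^2 + p^2 := by
      nlinarith [pow_pos hr0 3, hApos]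
    have key : (1-p)^2 < ((1-p)^2 + p^2) * r := by
      nlinarith [mul_lt_mul_of_pos_right hA hr0, hr2]
    have h1 : r⁻¹ < 1 + (p / (1 - p)) ^ 2 := by
      rw [e, hinv, div_lt_div_iff₀ hr0 (by positivity)]
      linarith
    linarith
end

section
/- Let 2 ≤ k ≤ n be integers and G a graph on n vertices. Then bp(G) ≤ n - k if and only if G contains a special subgraph of order k. -/
open Finset

/-- The finset of edges (as elements of `Sym2 V`) of the complete bipartite graph with
parts `A` and `B`. -/
def bicliqueEdges {V : Type*} [DecidableEq V] (A B : Finset V) : Finset (Sym2 V) :=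
  (A ×ˢ B).image fun p => s(p.1, p.2)

/-- `P` is a partition of the edge set of `G` into pairwise edge-disjoint nonempty complete
bipartite subgraphs. -/
def IsBicliquePartition {V : Type*} [Fintype V] [DecidableEq V] (G : SimpleGraph V)
    [DecidableRel G.Adj] (P : Finset (Finset V × Finset V)) : Prop :=
  (∀ c ∈ P, c.1.Nonempty ∧ c.2.Nonempty ∧ Disjoint c.1 c.2 ∧
      ∀ a ∈ c.1, ∀ b ∈ c.2, G.Adj a b) ∧
  ((P : Set (Finset V × Finset V)).Pairwise fun c d =>
      Disjoint (bicliqueEdges c.1 c.2) (bicliqueEdges d.1 d.2)) ∧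
  P.sup (fun c => bicliqueEdges c.1 c.2) = G.edgeFinset

/-- The biclique partition number. -/
noncomputable def bp {V : Type*} [Fintype V] [DecidableEq V] (G : SimpleGraph V)
    [DecidableRel G.Adj] : ℕ :=
  sInf {m | ∃ P : Finset (Finset V × Finset V), IsBicliquePartition G P ∧ P.card = m}

/-- `G` has a special subgraph of order `k`: an induced subgraph on a vertex set `H` of
size `k + r` (for some `r ≥ 0`) whose edge set decomposes into at most `r` pairwise
edge-disjoint non-star complete bipartite subgraphs (each part having at least 2 vertices). -/
def HasSpecialSubgraph {V : Type*} [Fintype V] [DecidableEq V] (G : SimpleGraph V)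
    [DecidableRel G.Adj] (k : ℕ) : Prop :=
  ∃ (H : Finset V) (P : Finset (Finset V × Finset V)) (r : ℕ),
    H.card = k + r ∧ P.card ≤ r ∧
    (∀ c ∈ P, 2 ≤ c.1.card ∧ 2 ≤ c.2.card ∧ c.1 ⊆ H ∧ c.2 ⊆ H ∧ Disjoint c.1 c.2 ∧
      ∀ a ∈ c.1, ∀ b ∈ c.2, G.Adj a b) ∧
    ((P : Set (Finset V × Finset V)).Pairwise fun c d =>
      Disjoint (bicliqueEdges c.1 c.2) (bicliqueEdges d.1 d.2)) ∧
    (∀ e : Sym2 V, e ∈ P.sup (fun c => bicliqueEdges c.1 c.2) ↔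
      (e ∈ G.edgeFinset ∧ ∀ v ∈ e, v ∈ H))


section Helpers
variable {V : Type*} [DecidableEq V]

lemma mem_bicliqueEdges {A B : Finset V} {e : Sym2 V} :
    e ∈ bicliqueEdges A B ↔ ∃ a ∈ A, ∃ b ∈ B, s(a,b) = e := by
  simp [bicliqueEdges]; tauto

lemma bicliqueEdges_mono {A A' B B' : Finset V} (h1 : A ⊆ A') (h2 : B ⊆ B') :
    bicliqueEdges A B ⊆ bicliqueEdges A' B' := by
  intro e he
  rw [mem_bicliqueEdges] at he ⊢
  obtain ⟨a, ha, b, hb, rfl⟩ := he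
  exact ⟨a, h1 ha, b, h2 hb, rfl⟩

lemma bicliqueEdges_erase {A B : Finset V} {v : V} {e : Sym2 V} :
    e ∈ bicliqueEdges (A.erase v) (B.erase v) ↔ e ∈ bicliqueEdges A B ∧ v ∉ e := by
  constructor
  · rintro he
    rw [mem_bicliqueEdges] at he
    obtain ⟨a, ha, b, hb, rfl⟩ := he
    rw [mem_erase] at ha hb
    refine ⟨mem_bicliqueEdges.2 ⟨a, ha.2, b, hb.2, rfl⟩, ?_⟩
    simp [Sym2.mem_iff]
    exact ⟨fun h => ha.1 h.symm, fun h => hb.1 h.symm⟩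
  · rintro ⟨he, hv⟩
    rw [mem_bicliqueEdges] at he
    obtain ⟨a, ha, b, hb, rfl⟩ := he
    simp only [Sym2.mem_iff, not_or] at hv
    exact mem_bicliqueEdges.2 ⟨a, mem_erase.2 ⟨fun h => hv.1 h.symm, ha⟩, b,
      mem_erase.2 ⟨fun h => hv.2 h.symm, hb⟩, rfl⟩

variable [Fintype V] (G : SimpleGraph V) [DecidableRel G.Adj]

lemma shrink (n : ℕ) : ∀ (P : Finset (Finset V × Finset V)) (H : Finset V),
    P.card ≤ n →
    (∀ c ∈ P, c.1 ⊆ H ∧ c.2 ⊆ H ∧ Disjoint c.1 c.2 ∧ ∀ a ∈ c.1, ∀ b ∈ c.2, G.Adj a b) →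
    ((P : Set (Finset V × Finset V)).Pairwise fun c d =>
      Disjoint (bicliqueEdges c.1 c.2) (bicliqueEdges d.1 d.2)) →
    (∀ e : Sym2 V, e ∈ P.sup (fun c => bicliqueEdges c.1 c.2) ↔
      (e ∈ G.edgeFinset ∧ ∀ v ∈ e, v ∈ H)) →
    ∃ (H' : Finset V) (P' : Finset (Finset V × Finset V)),
      H.card + P'.card ≤ H'.card + P.card ∧ H'.card ≤ H.card ∧
      (∀ c ∈ P', 2 ≤ c.1.card ∧ 2 ≤ c.2.card ∧ c.1 ⊆ H' ∧ c.2 ⊆ H' ∧ Disjoint c.1 c.2 ∧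
        ∀ a ∈ c.1, ∀ b ∈ c.2, G.Adj a b) ∧
      ((P' : Set (Finset V × Finset V)).Pairwise fun c d =>
        Disjoint (bicliqueEdges c.1 c.2) (bicliqueEdges d.1 d.2)) ∧
      (∀ e : Sym2 V, e ∈ P'.sup (fun c => bicliqueEdges c.1 c.2) ↔
        (e ∈ G.edgeFinset ∧ ∀ v ∈ e, v ∈ H')) := by
  induction n with
  | zero =>
    intro P H hcard h1 h2 h3
    have : P = ∅ := card_eq_zero.1 (Nat.le_zero.1 hcard)
    subst this
    exact ⟨H, ∅, by simp, le_refl _, by simp, by simp, h3⟩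
  | succ n ih =>
    intro P H hcard h1 h2 h3
    by_cases hall : ∀ c ∈ P, 2 ≤ c.1.card ∧ 2 ≤ c.2.card
    · exact ⟨H, P, le_refl _, le_refl _, fun c hc => ⟨(hall c hc).1, (hall c hc).2,
        (h1 c hc).1, (h1 c hc).2.1, (h1 c hc).2.2.1, (h1 c hc).2.2.2⟩, h2, h3⟩
    push_neg at hall
    obtain ⟨c, hcP, hsmall⟩ := hall

    have hsmall' : c.1.card ≤ 1 ∨ c.2.card ≤ 1 := by
      by_cases h : 2 ≤ c.1.card
      · right; omega
      · left; omega
    have hdec : ∃ (H₂ : Finset V) (P₂ : Finset (Finset V × Finset V)),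
        P₂.card ≤ n ∧ H.card + P₂.card ≤ H₂.card + P.card ∧ H₂.card ≤ H.card ∧
        (∀ d ∈ P₂, d.1 ⊆ H₂ ∧ d.2 ⊆ H₂ ∧ Disjoint d.1 d.2 ∧
          ∀ a ∈ d.1, ∀ b ∈ d.2, G.Adj a b) ∧
        ((P₂ : Set (Finset V × Finset V)).Pairwise fun c d =>
          Disjoint (bicliqueEdges c.1 c.2) (bicliqueEdges d.1 d.2)) ∧
        (∀ e : Sym2 V, e ∈ P₂.sup (fun c => bicliqueEdges c.1 c.2) ↔
          (e ∈ G.edgeFinset ∧ ∀ v ∈ e, v ∈ H₂)) := by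
      have hcases : (c.1 = ∅ ∨ c.2 = ∅) ∨ ∃ v : V, c.1 = {v} ∨ c.2 = {v} := by
        rcases hsmall' with h | h
        · interval_cases h' : c.1.card
          · exact Or.inl (Or.inl (card_eq_zero.1 h'))
          · obtain ⟨v, hv⟩ := card_eq_one.1 h'
            exact Or.inr ⟨v, Or.inl hv⟩
        · interval_cases h' : c.2.card
          · exact Or.inl (Or.inr (card_eq_zero.1 h'))
          · obtain ⟨v, hv⟩ := card_eq_one.1 h'
            exact Or.inr ⟨v, Or.inr hv⟩
      have hcardc : 1 ≤ P.card := card_pos.2 ⟨c, hcP⟩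
      rcases hcases with hempty | ⟨v, hv⟩
      · -- empty side: drop c
        have hce : bicliqueEdges c.1 c.2 = ∅ := by
          rcases hempty with h | h <;> rw [h] <;> simp [bicliqueEdges]
        refine ⟨H, P.erase c, ?_, ?_, le_refl _, fun d hd => h1 d (mem_of_mem_erase hd), 
          h2.mono (by exact_mod_cast erase_subset c P), fun e => ?_⟩
        · rw [card_erase_of_mem hcP]; omega
        · rw [card_erase_of_mem hcP]; omega
        · rw [← h3 e]
          constructor
          · intro he
            exact (Finset.sup_mono (erase_subset c P) :
              (P.erase c).sup (fun c => bicliqueEdges c.1 c.2) ≤ _) he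
          · intro he
            rw [mem_sup] at he ⊢
            obtain ⟨d, hd, hde⟩ := he
            rcases eq_or_ne d c with rfl | hne
            · rw [hce] at hde; exact absurd hde (notMem_empty e)
            · exact ⟨d, mem_erase.2 ⟨hne, hd⟩, hde⟩
      · -- star: delete v
        have hvH : v ∈ H := by
          rcases hv with h | h
          · exact (h1 c hcP).1 (h ▸ mem_singleton_self v)
          · exact (h1 c hcP).2.1 (h ▸ mem_singleton_self v)
        set res : Finset V × Finset V → Finset V × Finset V :=
          fun d => (d.1.erase v, d.2.erase v) with hres
        set P₂ : Finset (Finset V × Finset V) :=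
          (P.image res).filter (fun d => d.1.Nonempty ∧ d.2.Nonempty) with hP₂
        have hresc : ¬ (((res c).1).Nonempty ∧ ((res c).2).Nonempty) := by
          rcases hv with h | h
          · rintro ⟨⟨x, hx⟩, -⟩
            simp [hres, h] at hx
          · rintro ⟨-, ⟨x, hx⟩⟩
            simp [hres, h] at hx
        have hcard2 : P₂.card ≤ P.card - 1 := by
          rw [hP₂, Finset.filter_image]
          refine le_trans (card_image_le) ?_
          have hsub : (P.filter fun a => (res a).1.Nonempty ∧ (res a).2.Nonempty) ⊆
              P.erase c := by
            intro x hx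
            rw [mem_filter] at hx
            refine mem_erase.2 ⟨?_, hx.1⟩
            rintro rfl
            exact hresc hx.2
          calc _ ≤ (P.erase c).card := card_le_card hsub
          _ = P.card - 1 := card_erase_of_mem hcP
        have hsup2 : ∀ e : Sym2 V, e ∈ P₂.sup (fun c => bicliqueEdges c.1 c.2) ↔
            ∃ d ∈ P, e ∈ bicliqueEdges (d.1.erase v) (d.2.erase v) := by
          intro e
          rw [mem_sup]
          constructor
          · rintro ⟨d, hd, hde⟩
            rw [hP₂, mem_filter, mem_image] at hd
            obtain ⟨⟨d₀, hd₀, rfl⟩, -⟩ := hd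
            exact ⟨d₀, hd₀, hde⟩
          · rintro ⟨d₀, hd₀, hde⟩
            refine ⟨res d₀, ?_, hde⟩
            rw [hP₂, mem_filter]
            refine ⟨mem_image_of_mem res hd₀, ?_, ?_⟩
            · obtain ⟨a, ha, b, hb, -⟩ := mem_bicliqueEdges.1 hde
              exact ⟨a, ha⟩
            · obtain ⟨a, ha, b, hb, -⟩ := mem_bicliqueEdges.1 hde
              exact ⟨b, hb⟩
        refine ⟨H.erase v, P₂, by omega, ?_, ?_, ?_, ?_, ?_⟩
        · rw [card_erase_of_mem hvH]
          have := card_pos.2 ⟨v, hvH⟩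
          omega
        · exact card_le_card (erase_subset v H)
        · intro d hd
          rw [hP₂, mem_filter, mem_image] at hd
          obtain ⟨⟨d₀, hd₀, rfl⟩, -⟩ := hd
          obtain ⟨hs1, hs2, hdisj, hadj⟩ := h1 d₀ hd₀
          exact ⟨erase_subset_erase v hs1, erase_subset_erase v hs2,
            hdisj.mono (erase_subset v d₀.1) (erase_subset v d₀.2),
            fun a ha b hb => hadj a (erase_subset v d₀.1 ha) b (erase_subset v d₀.2 hb)⟩
        · intro d hd d' hd' hne
          rw [mem_coe, hP₂, mem_filter, mem_image] at hd hd'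
          obtain ⟨⟨d₀, hd₀, rfl⟩, -⟩ := hd
          obtain ⟨⟨d₀', hd₀', rfl⟩, -⟩ := hd'
          have hne₀ : d₀ ≠ d₀' := fun h => hne (by rw [h])
          exact (h2 hd₀ hd₀' hne₀).mono
            (bicliqueEdges_mono (erase_subset v d₀.1) (erase_subset v d₀.2))
            (bicliqueEdges_mono (erase_subset v d₀'.1) (erase_subset v d₀'.2))
        · intro e
          rw [hsup2]
          constructor
          · rintro ⟨d₀, hd₀, hde⟩
            rw [bicliqueEdges_erase] at hde
            have hmem : e ∈ P.sup (fun c => bicliqueEdges c.1 c.2) :=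
              mem_sup.2 ⟨d₀, hd₀, hde.1⟩
            rw [h3] at hmem
            exact ⟨hmem.1, fun w hw => mem_erase.2
              ⟨fun h => hde.2 (h ▸ hw), hmem.2 w hw⟩⟩
          · rintro ⟨he, hw⟩
            have hmem : e ∈ P.sup (fun c => bicliqueEdges c.1 c.2) := by
              rw [h3]
              exact ⟨he, fun w hww => mem_of_mem_erase (hw w hww)⟩
            obtain ⟨d₀, hd₀, hde⟩ := mem_sup.1 hmem
            refine ⟨d₀, hd₀, bicliqueEdges_erase.2 ⟨hde, fun hv' => ?_⟩⟩
            exact (mem_erase.1 (hw v hv')).1 rfl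
    obtain ⟨H₂, P₂, hc2, hstep, hle2, i1, i2, i3⟩ := hdec
    obtain ⟨H', P', j0, j1, j2, j3, j4⟩ := ih P₂ H₂ hc2 i1 i2 i3
    exact ⟨H', P', by omega, by omega, j2, j3, j4⟩


lemma sym2_out (e : Sym2 V) : s(e.out.1, e.out.2) = e := by
  have := e.out_eq
  simp [Sym2.mk]

lemma bicliqueEdges_singleton (a b : V) : bicliqueEdges {a} {b} = {s(a,b)} := by
  simp [bicliqueEdges]

lemma exists_trivial_partition : ∃ P : Finset (Finset V × Finset V),
    IsBicliquePartition G P := by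
  classical
  refine ⟨G.edgeFinset.image (fun e => ({e.out.1}, {e.out.2})), ?_, ?_, ?_⟩
  · intro c hc
    obtain ⟨e, he, rfl⟩ := mem_image.1 hc
    have hadj : G.Adj e.out.1 e.out.2 := by
      rw [SimpleGraph.mem_edgeFinset] at he
      rw [← SimpleGraph.mem_edgeSet, sym2_out]
      exact he
    refine ⟨singleton_nonempty _, singleton_nonempty _, ?_, ?_⟩
    · rw [Finset.disjoint_singleton]
      exact hadj.ne
    · intro a ha b hb
      rw [mem_singleton] at ha hb
      subst ha; subst hb
      exact hadj
  · intro c hc d hd hne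
    rw [mem_coe, mem_image] at hc hd
    obtain ⟨e, he, rfl⟩ := hc
    obtain ⟨e', he', rfl⟩ := hd
    rw [bicliqueEdges_singleton, bicliqueEdges_singleton, sym2_out, sym2_out,
      Finset.disjoint_singleton]
    intro h
    exact hne (by rw [h])
  · ext f
    rw [mem_sup]
    constructor
    · rintro ⟨c, hc, hf⟩
      obtain ⟨e, he, rfl⟩ := mem_image.1 hc
      rw [bicliqueEdges_singleton, sym2_out, mem_singleton] at hf
      subst hf
      exact he
    · intro hf
      exact ⟨_, mem_image_of_mem _ hf,
        by rw [bicliqueEdges_singleton, sym2_out]; exact mem_singleton_self f⟩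

lemma hasSpecialSubgraph_of_bp_le (k : ℕ) (hkn : k ≤ Fintype.card V)
    (h : bp G ≤ Fintype.card V - k) : HasSpecialSubgraph G k := by
  obtain ⟨P₀, hP₀⟩ := exists_trivial_partition G
  have hne : {m | ∃ P : Finset (Finset V × Finset V),
      IsBicliquePartition G P ∧ P.card = m}.Nonempty := ⟨P₀.card, P₀, hP₀, rfl⟩
  have hmem := Nat.sInf_mem hne
  obtain ⟨P, hP, hPc⟩ := hmem
  have hPcard : P.card ≤ Fintype.card V - k := by rw [hPc]; exact h
  obtain ⟨h1, h2, h3⟩ := hP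
  obtain ⟨H', P', j0, j1, j2, j3, j4⟩ := shrink G P.card P Finset.univ (le_refl _)
    (fun c hc => ⟨subset_univ _, subset_univ _, (h1 c hc).2.2.1, (h1 c hc).2.2.2⟩) h2
    (fun e => by simp [h3])
  have hcu : (univ : Finset V).card = Fintype.card V := card_univ
  refine ⟨H', P', H'.card - k, ?_, ?_, j2, j3, j4⟩ <;> omega

lemma bp_le_of_hasSpecialSubgraph (k : ℕ) (h : HasSpecialSubgraph G k) :
    bp G ≤ Fintype.card V - k := by
  obtain ⟨H, P, r, hH, hPr, hparts, hpair, hiff⟩ := h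
  classical
  set f : V ≃ Fin (Fintype.card V) := Fintype.equivFin V with hf
  set Nbr : V → Finset V := fun v =>
    G.neighborFinset v ∩ (H ∪ (Hᶜ.filter fun w => (f v : ℕ) < (f w : ℕ))) with hNbr
  set S : V → Finset V × Finset V := fun v => ({v}, Nbr v) with hS
  set T : Finset V := Hᶜ.filter (fun v => (Nbr v).Nonempty) with hT
  set Q : Finset (Finset V × Finset V) := P ∪ T.image S with hQ
  have hHn : H.card ≤ Fintype.card V := card_le_univ H
  have hTc : T ⊆ Hᶜ := filter_subset _ _
  -- every edge of a part of P has both endpoints in H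
  have hPH : ∀ c ∈ P, ∀ e ∈ bicliqueEdges c.1 c.2, ∀ w ∈ e, w ∈ H := by
    intro c hc e he w hw
    exact ((hiff e).1 (mem_sup.2 ⟨c, hc, he⟩)).2 w hw
  have hSedge : ∀ v, ∀ e ∈ bicliqueEdges (S v).1 (S v).2,
      ∃ b ∈ Nbr v, e = s(v, b) := by
    intro v e he
    obtain ⟨a, ha, b, hb, rfl⟩ := mem_bicliqueEdges.1 he
    rw [hS] at ha hb
    simp only [mem_singleton] at ha
    exact ⟨b, hb, by rw [ha]⟩
  have hQcard : Q.card ≤ Fintype.card V - k := by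
    have h1 : Q.card ≤ P.card + (T.image S).card := card_union_le _ _
    have h2 : (T.image S).card ≤ T.card := card_image_le
    have h3 : T.card ≤ Hᶜ.card := card_le_card hTc
    have h4 : Hᶜ.card = Fintype.card V - H.card := by
      rw [card_compl]
    omega
  have hQpart : IsBicliquePartition G Q := by
    refine ⟨?_, ?_, ?_⟩
    · intro c hc
      rw [hQ, mem_union] at hc
      rcases hc with hc | hc
      · obtain ⟨hc1, hc2, _, _, hd, ha⟩ := hparts c hc
        exact ⟨card_pos.1 (by omega), card_pos.1 (by omega), hd, ha⟩
      · obtain ⟨v, hv, rfl⟩ := mem_image.1 hc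
        rw [hT, mem_filter] at hv
        refine ⟨singleton_nonempty v, hv.2, ?_, ?_⟩
        · rw [disjoint_singleton_left]
          simp only [hS]
          intro hmem
          exact (G.notMem_neighborFinset_self v) (mem_inter.1 hmem).1
        · intro a ha b hb
          rw [hS, mem_singleton] at ha
          subst ha
          exact (SimpleGraph.mem_neighborFinset G a b).1 (mem_inter.1 hb).1
    · intro c hc d hd hne
      rw [mem_coe, hQ, mem_union] at hc hd
      rcases hc with hc | hc <;> rcases hd with hd | hd
      · exact hpair hc hd hne
      · obtain ⟨v, hv, rfl⟩ := mem_image.1 hd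
        rw [disjoint_left]
        intro e he hev
        obtain ⟨b, hb, rfl⟩ := hSedge v e hev
        have : v ∈ H := hPH c hc _ he v (Sym2.mem_mk_left v b)
        exact (mem_compl.1 (hTc hv)) this
      · obtain ⟨v, hv, rfl⟩ := mem_image.1 hc
        rw [disjoint_left]
        intro e he hev
        obtain ⟨b, hb, rfl⟩ := hSedge v e he
        have : v ∈ H := hPH d hd _ hev v (Sym2.mem_mk_left v b)
        exact (mem_compl.1 (hTc hv)) this
      · obtain ⟨v, hv, rfl⟩ := mem_image.1 hc
        obtain ⟨w, hw, rfl⟩ := mem_image.1 hd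
        have hvw : v ≠ w := fun h => hne (by rw [h])
        rw [disjoint_left]
        intro e he hev
        obtain ⟨b, hb, rfl⟩ := hSedge v e he
        obtain ⟨b', hb', heq⟩ := hSedge w _ hev
        rw [Sym2.eq_iff] at heq
        rcases heq with ⟨rfl, rfl⟩ | ⟨h1, h2⟩
        · exact hvw rfl
        · -- b' = v, b = w : w ∈ Nbr v and v ∈ Nbr w
          have hbw : w ∈ Nbr v := h2 ▸ hb
          have hvw2 : v ∈ Nbr w := h1 ▸ hb'
          rw [hNbr] at hbw hvw2
          have hw1 := (mem_inter.1 hbw).2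
          have hv1 := (mem_inter.1 hvw2).2
          rw [mem_union] at hw1 hv1
          have hwH : w ∉ H := mem_compl.1 (hTc hw)
          have hvH : v ∉ H := mem_compl.1 (hTc hv)
          rcases hw1 with h | h
          · exact hwH h
          · rcases hv1 with h' | h'
            · exact hvH h'
            · have l1 := (mem_filter.1 h).2
              have l2 := (mem_filter.1 h').2
              omega
    · ext e
      rw [hQ, Finset.sup_union, Finset.sup_eq_union, Finset.mem_union]
      constructor
      · rintro (he | he)
        · exact ((hiff e).1 he).1
        · obtain ⟨c, hc, hec⟩ := mem_sup.1 he
          obtain ⟨v, hv, rfl⟩ := mem_image.1 hc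
          obtain ⟨b, hb, rfl⟩ := hSedge v e hec
          rw [SimpleGraph.mem_edgeFinset]
          exact (SimpleGraph.mem_neighborFinset G v b).1 (mem_inter.1 (hNbr ▸ hb)).1
      · intro he
        induction e using Sym2.ind with
        | _ a b =>
        have hab : G.Adj a b := by rwa [SimpleGraph.mem_edgeFinset,
          SimpleGraph.mem_edgeSet] at he
        -- helper to produce membership in a star
        have star : ∀ v w : V, v ∈ Hᶜ → w ∈ Nbr v → s(v, w) ∈
            (T.image S).sup (fun c => bicliqueEdges c.1 c.2) := by
          intro v w hv hw
          refine mem_sup.2 ⟨S v, mem_image_of_mem S ?_, ?_⟩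
          · rw [hT, mem_filter]; exact ⟨hv, ⟨w, hw⟩⟩
          · exact mem_bicliqueEdges.2 ⟨v, mem_singleton_self v, w, hw, rfl⟩
        by_cases haH : a ∈ H <;> by_cases hbH : b ∈ H
        · left
          rw [hiff]
          refine ⟨he, ?_⟩
          intro w hw
          rcases Sym2.mem_iff.1 hw with rfl | rfl
          · exact haH
          · exact hbH
        · right
          rw [Sym2.eq_swap]
          refine star b a (mem_compl.2 hbH) ?_
          rw [hNbr, mem_inter]
          exact ⟨(SimpleGraph.mem_neighborFinset G b a).2 hab.symm,
            mem_union.2 (Or.inl haH)⟩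
        · right
          refine star a b (mem_compl.2 haH) ?_
          rw [hNbr, mem_inter]
          exact ⟨(SimpleGraph.mem_neighborFinset G a b).2 hab,
            mem_union.2 (Or.inl hbH)⟩
        · right
          have hne : (f a : ℕ) ≠ (f b : ℕ) := by
            intro hcontra
            exact hab.ne (f.injective (Fin.ext hcontra))
          rcases Nat.lt_or_ge (f a : ℕ) (f b : ℕ) with hlt | hge
          · refine star a b (mem_compl.2 haH) ?_
            rw [hNbr, mem_inter]
            refine ⟨(SimpleGraph.mem_neighborFinset G a b).2 hab,
              mem_union.2 (Or.inr ?_)⟩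
            rw [mem_filter]
            exact ⟨mem_compl.2 hbH, hlt⟩
          · have hlt : (f b : ℕ) < (f a : ℕ) := by omega
            rw [Sym2.eq_swap]
            refine star b a (mem_compl.2 hbH) ?_
            rw [hNbr, mem_inter]
            refine ⟨(SimpleGraph.mem_neighborFinset G b a).2 hab.symm,
              mem_union.2 (Or.inr ?_)⟩
            rw [mem_filter]
            exact ⟨mem_compl.2 haH, hlt⟩
  exact le_trans (Nat.sInf_le ⟨Q, hQpart, rfl⟩) hQcard

end Helpers

theorem bp_le_iff_specialSubgraph {V : Type*} [Fintype V] [DecidableEq V] (G : SimpleGraph V)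
    [DecidableRel G.Adj] (k : ℕ) (hk2 : 2 ≤ k) (hkn : k ≤ Fintype.card V) :
    bp G ≤ Fintype.card V - k ↔ HasSpecialSubgraph G k := by
  constructor
  · exact fun h => hasSpecialSubgraph_of_bp_le G k hkn h
  · exact fun h => bp_le_of_hasSpecialSubgraph G k h
end

section
/- If 0 < p < 0.01 and m' ≥ 2, n' ≥ 2m' are integers, then Σ_{ℓ ≥ μ ≥ m', ℓ+μ ≤ n'} C(n', ℓ+μ) · C(ℓ+μ, ℓ) · (p/(1-p))^(ℓμ) ≤ 2 · C(n', m') · (1 + (p/(1-p))^{m'})^{n'}. -/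
/-!
Put `x = p / (1 - p) ≤ 1/4` and index the terms by the row `r = ℓ + μ` and by `μ`; the term is
`C(n', r) C(r, μ) x^{μ (r - μ)}`. Moving from `μ` to `μ + 1` inside a row multiplies `C(r, μ)` by at
most `d + 1` and the power of `x` by `x^d`, where `d = r - 2μ - 1 ≥ 1`, so each row decreases at
least geometrically with ratio `1/2` and is at most twice its first term `μ = m'`. Summing these over
`r` gives `2 C(n', m') (1 + x^{m'})^{n' - m'}` by `C(n, r) C(r, m) = C(n, m) C(n - m, r - m)` and
the binomial theorem.
-/

open Finset

theorem sum_range_le_two_mul_of_le_half (a : ℕ → ℝ) (k : ℕ) (h0 : 0 ≤ a 0)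
    (hhalf : ∀ i, i + 1 < k → a (i + 1) ≤ a i / 2) :
    ∑ i ∈ range k, a i ≤ 2 * a 0 := by
  have hgeom : ∀ i < k, a i ≤ (1 / 2 : ℝ) ^ i * a 0 := by
    intro i hi
    induction i with
    | zero => simp
    | succ i ih =>
      calc a (i + 1) ≤ a i / 2 := hhalf i hi
        _ ≤ (1 / 2 : ℝ) ^ i * a 0 / 2 := by gcongr; exact ih (by omega)
        _ = (1 / 2 : ℝ) ^ (i + 1) * a 0 := by ring
  calc ∑ i ∈ range k, a i ≤ ∑ i ∈ range k, (1 / 2 : ℝ) ^ i * a 0 :=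
        sum_le_sum fun i hi => hgeom i (mem_range.mp hi)
    _ = (∑ i ∈ range k, (1 / 2 : ℝ) ^ i) * a 0 := by rw [sum_mul]
    _ ≤ 2 * a 0 := by gcongr; exact sum_geometric_two_le k

theorem Nat.choose_succ_le_choose_mul {r μ : ℕ} (h : 2 * μ + 1 ≤ r) :
    r.choose (μ + 1) ≤ r.choose μ * (r - 2 * μ) := by
  have hrel := Nat.choose_succ_right_eq r μ
  have hle : r - μ ≤ (μ + 1) * (r - 2 * μ) := by
    obtain ⟨d, rfl⟩ : ∃ d, r = 2 * μ + 1 + d := ⟨r - (2 * μ + 1), by omega⟩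
    rw [show 2 * μ + 1 + d - μ = μ + 1 + d by omega, show 2 * μ + 1 + d - 2 * μ = d + 1 by omega]
    nlinarith
  have : r.choose (μ + 1) * (μ + 1) ≤ r.choose μ * (r - 2 * μ) * (μ + 1) := by
    rw [hrel, mul_assoc, mul_comm (r - 2 * μ)]
    exact Nat.mul_le_mul_left _ hle
  exact Nat.le_of_mul_le_mul_right this (Nat.succ_pos μ)

theorem succ_mul_pow_le_half {x : ℝ} (hx0 : 0 ≤ x) (hx : x ≤ 1 / 4) {d : ℕ} (hd : 1 ≤ d) :
    (d + 1) * x ^ d ≤ 1 / 2 := by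
  have h2d : (d + 1 : ℝ) ≤ 2 ^ d := by exact_mod_cast Nat.lt_two_pow_self
  calc (d + 1) * x ^ d ≤ 2 ^ d * x ^ d := by gcongr
    _ = (2 * x) ^ d := (mul_pow 2 x d).symm
    _ ≤ (2 * x) ^ 1 := pow_le_pow_of_le_one (by positivity) (by linarith) hd
    _ ≤ 1 / 2 := by linarith

theorem choose_mul_pow_succ_le_half {x : ℝ} (hx0 : 0 ≤ x) (hx : x ≤ 1 / 4) {r μ : ℕ}
    (h : 2 * (μ + 1) ≤ r) :
    (r.choose (μ + 1) : ℝ) * x ^ ((μ + 1) * (r - (μ + 1))) ≤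
      (r.choose μ : ℝ) * x ^ (μ * (r - μ)) / 2 := by
  set d := r - 2 * μ - 1
  have hexp : (μ + 1) * (r - (μ + 1)) = μ * (r - μ) + d := by
    obtain ⟨e, rfl⟩ : ∃ e, r = 2 * μ + 2 + e := ⟨r - (2 * μ + 2), by omega⟩
    simp only [d, show 2 * μ + 2 + e - (μ + 1) = μ + 1 + e by omega,
      show 2 * μ + 2 + e - μ = μ + 2 + e by omega, show 2 * μ + 2 + e - 2 * μ - 1 = e + 1 by omega]
    ring
  have hchoose : (r.choose (μ + 1) : ℝ) ≤ r.choose μ * (d + 1) := by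
    have := Nat.choose_succ_le_choose_mul (r := r) (μ := μ) (by omega)
    rw [show r - 2 * μ = d + 1 by omega] at this
    exact_mod_cast this
  calc (r.choose (μ + 1) : ℝ) * x ^ ((μ + 1) * (r - (μ + 1)))
      ≤ r.choose μ * (d + 1) * (x ^ (μ * (r - μ)) * x ^ d) := by
        rw [hexp, pow_add]; gcongr
    _ = r.choose μ * x ^ (μ * (r - μ)) * ((d + 1) * x ^ d) := by ring
    _ ≤ r.choose μ * x ^ (μ * (r - μ)) * (1 / 2) := by
        gcongr; exact succ_mul_pow_le_half hx0 hx (by omega)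
    _ = r.choose μ * x ^ (μ * (r - μ)) / 2 := by ring

theorem sum_Icc_choose_mul_pow_le {x : ℝ} (hx0 : 0 ≤ x) (hx : x ≤ 1 / 4) (m r : ℕ) :
    ∑ μ ∈ Icc m (r / 2), (r.choose μ : ℝ) * x ^ (μ * (r - μ)) ≤
      2 * ((r.choose m : ℝ) * x ^ (m * (r - m))) := by
  rw [← Ico_add_one_right_eq_Icc, sum_Ico_eq_sum_range]
  exact sum_range_le_two_mul_of_le_half (fun i => (r.choose (m + i) : ℝ) * x ^ ((m + i) * (r - (m + i))))
    _ (by positivity) fun i hi => choose_mul_pow_succ_le_half (μ := m + i) hx0 hx (by omega)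

theorem sum_choose_mul_choose_mul_pow {R : Type*} [CommSemiring R] (n m : ℕ) (y : R) :
    ∑ r ∈ range (n + 1), (n.choose r * r.choose m : R) * y ^ (r - m) =
      n.choose m * (1 + y) ^ (n - m) := by
  rcases lt_or_ge n m with hnm | hmn
  · rw [Nat.choose_eq_zero_of_lt hnm]
    simp only [Nat.cast_zero, zero_mul]
    refine sum_eq_zero fun r hr => ?_
    rw [Nat.choose_eq_zero_of_lt (n := r) (k := m) (by simp at hr; omega)]
    simp
  · rw [show n + 1 = m + (n - m + 1) by omega, sum_range_add, add_comm 1 y, add_pow, mul_sum]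
    rw [sum_eq_zero fun r hr => by rw [Nat.choose_eq_zero_of_lt (mem_range.mp hr)]; simp, zero_add]
    refine sum_congr rfl fun j hj => ?_
    have hid := Nat.choose_mul (n := n) (k := m + j) (s := m) (by omega)
    rw [Nat.add_sub_cancel_left] at hid ⊢
    rw [show (n.choose (m + j) * (m + j).choose m : R) = n.choose m * (n - m).choose j by
      rw [← Nat.cast_mul, hid, Nat.cast_mul]]
    ring

theorem sum_triangle_eq_sum_range_sum_Icc {M : Type*} [AddCommMonoid M] (m n : ℕ)
    (f : ℕ → ℕ → M) :
    ∑ q ∈ (range (n + 1) ×ˢ range (n + 1)).filter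
        (fun q => m ≤ q.2 ∧ q.2 ≤ q.1 ∧ q.1 + q.2 ≤ n), f (q.1 + q.2) q.2 =
      ∑ r ∈ range (n + 1), ∑ μ ∈ Icc m (r / 2), f r μ := by
  rw [← sum_finset_product' ((range (n + 1) ×ˢ range (n + 1)).filter
      (fun s => m ≤ s.2 ∧ 2 * s.2 ≤ s.1)) _ _ (by intro s; simp; omega)]
  refine sum_nbij' (fun q => (q.1 + q.2, q.2)) (fun s => (s.1 - s.2, s.2)) ?_ ?_ ?_ ?_ ?_
  all_goals
    intro q hq
    simp only [mem_filter, mem_product, mem_range] at hq ⊢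
  · omega
  · omega
  · exact Prod.ext (by dsimp only; omega) rfl
  · exact Prod.ext (by dsimp only; omega) rfl

theorem double_sum_bound_general (m' n' : ℕ)
    (p : ℝ) (hp : 0 < p) (hp1 : p < 0.01) :
    ∑ q ∈ (Finset.range (n' + 1) ×ˢ Finset.range (n' + 1)).filter
        (fun q => m' ≤ q.2 ∧ q.2 ≤ q.1 ∧ q.1 + q.2 ≤ n'),
        (n'.choose (q.1 + q.2) : ℝ) * ((q.1 + q.2).choose q.1 : ℝ) * (p / (1 - p)) ^ (q.1 * q.2)
      ≤ 2 * (n'.choose m' : ℝ) * (1 + (p / (1 - p)) ^ m') ^ n' := by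
  norm_num at hp1
  set x := p / (1 - p)
  have hx0 : 0 ≤ x := div_nonneg hp.le (by linarith)
  have hx : x ≤ 1 / 4 := by rw [div_le_iff₀ (by linarith)]; linarith
  have hterm : ∀ ℓ μ : ℕ, (n'.choose (ℓ + μ) : ℝ) * ((ℓ + μ).choose ℓ) * x ^ (ℓ * μ) =
      n'.choose (ℓ + μ) * ((ℓ + μ).choose μ * x ^ (μ * (ℓ + μ - μ))) := by
    intro ℓ μ
    rw [Nat.choose_symm_add, Nat.add_sub_cancel, mul_comm μ, mul_assoc]
  simp_rw [hterm, sum_triangle_eq_sum_range_sum_Icc m' n'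
    (fun r μ => (n'.choose r : ℝ) * (r.choose μ * x ^ (μ * (r - μ)))), ← mul_sum]
  calc ∑ r ∈ range (n' + 1), (n'.choose r : ℝ) *
        ∑ μ ∈ Icc m' (r / 2), (r.choose μ : ℝ) * x ^ (μ * (r - μ))
      ≤ ∑ r ∈ range (n' + 1), (n'.choose r : ℝ) * (2 * (r.choose m' * x ^ (m' * (r - m')))) := by
        gcongr with r; exact sum_Icc_choose_mul_pow_le hx0 hx m' r
    _ = 2 * ∑ r ∈ range (n' + 1), (n'.choose r * r.choose m' : ℝ) * (x ^ m') ^ (r - m') := by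
        rw [mul_sum]; refine sum_congr rfl fun r _ => ?_; rw [← pow_mul]; ring
    _ = 2 * n'.choose m' * (1 + x ^ m') ^ (n' - m') := by
        rw [sum_choose_mul_choose_mul_pow, mul_assoc]
    _ ≤ 2 * n'.choose m' * (1 + x ^ m') ^ n' := by
        gcongr
        · exact le_add_of_nonneg_right (by positivity)
        · omega

theorem double_sum_bound (m' n' : ℕ) (hm : 2 ≤ m') (hn : 2 * m' ≤ n')
    (p : ℝ) (hp : 0 < p) (hp1 : p < 0.01) :
    ∑ q ∈ (Finset.range (n' + 1) ×ˢ Finset.range (n' + 1)).filter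
        (fun q => m' ≤ q.2 ∧ q.2 ≤ q.1 ∧ q.1 + q.2 ≤ n'),
        (n'.choose (q.1 + q.2) : ℝ) * ((q.1 + q.2).choose q.1 : ℝ) * (p / (1 - p)) ^ (q.1 * q.2)
      ≤ 2 * (n'.choose m' : ℝ) * (1 + (p / (1 - p)) ^ m') ^ n' :=
  double_sum_bound_general m' n' p hp hp1
end

section
/- Let p₀ be the real root of 4x³ - 7x² + 5x - 1 and let p₀ < p < 1/2. Then there exist constants a, c with 0 < a < 0.01 and 0 < c < 0.01 such that ((1-p)^(-1/2))^((a + 4c)/(a(1-a)(1+2c))) < 1 + (p/(1-p))². -/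
theorem exists_a_c_rpow_lt (p₀ : ℝ) (hroot : 4 * p₀ ^ 3 - 7 * p₀ ^ 2 + 5 * p₀ - 1 = 0)
    (p : ℝ) (hp₀ : p₀ < p) (hp2 : p < 1 / 2) :
    ∃ a c : ℝ, 0 < a ∧ a < 0.01 ∧ 0 < c ∧ c < 0.01 ∧
      ((1 - p) ^ (-(1 / 2 : ℝ))) ^ ((a + 4 * c) / (a * (1 - a) * (1 + 2 * c)) : ℝ)
        < 1 + (p / (1 - p)) ^ 2 := by
  have hp₀pos : 0 < p₀ := by
    by_contra h
    push_neg at h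
    nlinarith [sq_nonneg p₀, mul_nonneg (neg_nonneg.2 h) (sq_nonneg p₀)]
  have hp : 0 < p := hp₀pos.trans hp₀
  have hq : 0 < 1 - p := by linarith
  have hq1 : 1 - p < 1 := by linarith
  -- the cubic is positive at p
  have hg : 0 < 4 * p ^ 3 - 7 * p ^ 2 + 5 * p - 1 := by
    nlinarith [sq_nonneg (p - p₀), sq_nonneg (p + p₀ - 1), sq_nonneg (2 * (p + p₀) - 1),
      mul_pos (sub_pos.2 hp₀) (sub_pos.2 hp₀)]
  set R : ℝ := 1 + (p / (1 - p)) ^ 2 with hR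
  have hRpos : 0 < R := by positivity
  set B : ℝ := (1 - p) ^ (-(1 / 2 : ℝ)) with hB
  have hBpos : 0 < B := Real.rpow_pos_of_pos hq _
  have hB1 : 1 < B := by
    rw [hB, Real.one_lt_rpow_iff_of_pos hq]
    right
    constructor <;> [linarith; norm_num]
  have hBsq : B ^ (2 : ℕ) = 1 / (1 - p) := by
    rw [hB, ← Real.rpow_natCast ((1 - p) ^ (-(1 / 2 : ℝ))) 2, ← Real.rpow_mul hq.le]
    norm_num
    rw [Real.rpow_neg_one]
  have hBR : B < R := by
    refine lt_of_pow_lt_pow_left₀ 2 hRpos.le ?_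
    rw [hBsq]
    have h1 : R = ((1 - p) ^ 2 + p ^ 2) / (1 - p) ^ 2 := by
      rw [hR]; field_simp
    rw [h1, div_pow, div_lt_div_iff₀ hq (by positivity)]
    nlinarith [hg, sq_nonneg p, mul_pos hp hg]
  have hlogB : 0 < Real.log B := Real.log_pos hB1
  have hlogR : Real.log B < Real.log R := Real.log_lt_log hBpos hBR
  set t : ℝ := Real.log R / Real.log B with ht
  have ht1 : 1 < t := (one_lt_div hlogB).2 hlogR
  have hBt : B ^ t = R := by
    rw [Real.rpow_def_of_pos hBpos, ht, mul_div_cancel₀ _ hlogB.ne', Real.exp_log hRpos]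
  obtain ⟨ε, hεpos, hε005, hεt⟩ : ∃ ε : ℝ, 0 < ε ∧ ε ≤ 0.005 ∧ ε ≤ (t - 1) / 2 :=
    ⟨min 0.005 ((t - 1) / 2), lt_min (by norm_num) (by linarith), min_le_left _ _,
      min_le_right _ _⟩
  refine ⟨ε, ε ^ 2 / 8, hεpos, by linarith, by positivity, by nlinarith, ?_⟩
  rw [← hBt]
  rw [Real.rpow_lt_rpow_left_iff hB1]
  clear_value B R t
  clear hroot hg hB hR hBsq hBR hBpos hRpos hB1 hlogB hlogR hBt hp₀ hp2 hp₀pos hp hq hq1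
  have hε1 : ε < 1 := by linarith
  have hden : 0 < ε * (1 - ε) * (1 + 2 * (ε ^ 2 / 8)) := by
    apply mul_pos (mul_pos hεpos (by linarith)); positivity
  rw [div_lt_iff₀ hden]
  have hle : 1 + 2 * ε ≤ t := by linarith
  have h3 : ε ^ 3 ≤ ε := by nlinarith [mul_nonneg hεpos.le (sub_nonneg.2 hε1.le)]
  have hfac : 0 < 1 / 2 - 7 / 4 * ε + 1 / 4 * ε ^ 2 - 1 / 2 * ε ^ 3 := by
    linarith [h3, hε005, sq_nonneg ε]
  have hprod : 0 < ε * ε * (1 / 2 - 7 / 4 * ε + 1 / 4 * ε ^ 2 - 1 / 2 * ε ^ 3) :=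
    mul_pos (mul_pos hεpos hεpos) hfac
  have key : ε + 4 * (ε ^ 2 / 8) < (1 + 2 * ε) * (ε * (1 - ε) * (1 + 2 * (ε ^ 2 / 8))) := by
    nlinarith [hprod]
  calc ε + 4 * (ε ^ 2 / 8) < (1 + 2 * ε) * (ε * (1 - ε) * (1 + 2 * (ε ^ 2 / 8))) := key
    _ ≤ t * (ε * (1 - ε) * (1 + 2 * (ε ^ 2 / 8))) :=
        mul_le_mul_of_nonneg_right hle hden.le
end

section
/- Assume the two-event BKR inequality: for all events A, B in a finite product probability space S^d, P(A □ B) ≤ P(A)·P(B). Then for any finite collection of events A₁,...,A_r ⊆ S^d, P(□_{i=1}^r A_i) ≤ Π_{i=1}^r P(A_i), where □_{i=1}^r A_i = ∪ over pairwise disjoint index sets J₁,...,J_r ⊆ {1,...,d} of ∩_{i=1}^r [A_i]_{J_i}, and [A]_J = {ω ∈ A : Cyl(ω,J) ⊆ A}. -/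
open MeasureTheory

/-- The cylinder determined by the index set `K` at the point `ω`. -/
def Cyl {S : Type*} {d : ℕ} (ω : Fin d → S) (K : Set (Fin d)) : Set (Fin d → S) :=
  {α | ∀ i ∈ K, α i = ω i}

/-- The disjoint occurrence `A □ B` of two events. -/
def boxOcc {S : Type*} {d : ℕ} (A B : Set (Fin d → S)) : Set (Fin d → S) :=
  {ω | ∃ K : Set (Fin d), Cyl ω K ⊆ A ∧ Cyl ω Kᶜ ⊆ B}

/-- `[A]_J`: the points of `A` which belong to `A` by virtue of their coordinates on `J`. -/
def entryPart {S : Type*} {d : ℕ} (A : Set (Fin d → S)) (J : Set (Fin d)) :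
    Set (Fin d → S) :=
  {ω ∈ A | Cyl ω J ⊆ A}

/-- The `r`-fold disjoint occurrence `□_{i=1}^r A i`: the union over pairwise disjoint
index sets `J 1, ..., J r` of `∩ i, [A i]_{J i}`. -/
def boxMany {S : Type*} {d : ℕ} {r : ℕ} (A : Fin r → Set (Fin d → S)) :
    Set (Fin d → S) :=
  {ω | ∃ J : Fin r → Set (Fin d),
    (Pairwise fun i j => Disjoint (J i) (J j)) ∧ ∀ i, ω ∈ entryPart (A i) (J i)}

theorem bkr_inequality_many_of_two (S : Type*) [Finite S] [MeasurableSpace S] (d : ℕ)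
    (hd : 1 ≤ d) (ν : Measure S) [IsProbabilityMeasure ν]
    (hBKR : ∀ A B : Set (Fin d → S),
      (Measure.pi fun _ : Fin d => ν) (boxOcc A B) ≤
        (Measure.pi fun _ : Fin d => ν) A * (Measure.pi fun _ : Fin d => ν) B)
    (r : ℕ) (A : Fin r → Set (Fin d → S)) :
    (Measure.pi fun _ : Fin d => ν) (boxMany A) ≤
      ∏ i : Fin r, (Measure.pi fun _ : Fin d => ν) (A i) := by
  set μ := (Measure.pi fun _ : Fin d => ν) with hμ
  induction r with
  | zero =>
    have h : boxMany A = Set.univ := by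
      ext ω
      simp only [boxMany, Set.mem_setOf_eq, Set.mem_univ, iff_true]
      exact ⟨fun i => ∅, fun i => i.elim0, fun i => i.elim0⟩
    simp [h]
  | succ r ih =>
    have hsub : boxMany A ⊆ boxOcc (A (Fin.last r)) (boxMany (A ∘ Fin.castSucc)) := by
      rintro ω ⟨J, hJdisj, hJ⟩
      refine ⟨J (Fin.last r), (hJ (Fin.last r)).2, ?_⟩
      intro α hα
      refine ⟨fun i => J i.castSucc, ?_, ?_⟩
      · intro i j hij
        exact hJdisj (fun h => hij (Fin.castSucc_inj.mp h))
      · intro i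
        have hd2 : Disjoint (J i.castSucc) (J (Fin.last r)) :=
          hJdisj (fun h => absurd (congrArg Fin.val h) (by simp [Fin.castSucc]; omega))
        have hagree : ∀ k ∈ J i.castSucc, α k = ω k := by
          intro k hk
          exact hα k (fun hk' => (Set.disjoint_left.mp hd2 hk) hk')
        have hcyl : Cyl α (J i.castSucc) ⊆ Cyl ω (J i.castSucc) := by
          intro β hβ k hk
          rw [hβ k hk, hagree k hk]
        have hαA : α ∈ A i.castSucc := by
          apply (hJ i.castSucc).2
          intro k hk; exact hagree k hk
        exact ⟨hαA, fun β hβ => (hJ i.castSucc).2 (hcyl hβ)⟩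
    calc μ (boxMany A) ≤ μ (boxOcc (A (Fin.last r)) (boxMany (A ∘ Fin.castSucc))) :=
          measure_mono hsub
      _ ≤ μ (A (Fin.last r)) * μ (boxMany (A ∘ Fin.castSucc)) := hBKR _ _
      _ ≤ μ (A (Fin.last r)) * ∏ i : Fin r, μ (A i.castSucc) :=
          mul_le_mul_right (ih (A ∘ Fin.castSucc)) _
      _ = ∏ i : Fin (r + 1), μ (A i) := by
          rw [Fin.prod_univ_castSucc, mul_comm]
end
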